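/- For 0 < φ ≤ β ≤ 1, the integral from 0 to 1 of log2((φ⁻¹ - z)/(βφ⁻¹ - z)) dz equals H(φ)/φ - (β/φ)·H(φ/β), where H is the binary entropy function. -/

import Mathlib

/-! Substituting `x = a - z` turns the integrand into a difference of logarithms, and the
primitive `x log x - x` gives `∫₀¹ log (a - z) dz = a log a - (a - 1) log (a - 1) - 1`. At
`a = c⁻¹` this closed form is a rescaled binary entropy, since `c⁻¹ - 1 = (1 - c) / c`.
As `Real.log` is `log |x|`, these identities need no sign conditions. -/

open Real MeasureTheory

noncomputable def binEnt (p : ℝ) : ℝ :=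
  -(p * Real.logb 2 p) - (1 - p) * Real.logb 2 (1 - p)

theorem integral_log_sub_left (a : ℝ) :
    ∫ z in (0:ℝ)..1, log (a - z) = a * log a - (a - 1) * log (a - 1) - 1 := by
  rw [intervalIntegral.integral_comp_sub_left (fun x => log x), integral_log, sub_zero]
  ring

theorem intervalIntegrable_log_sub_left (a : ℝ) :
    IntervalIntegrable (fun z => log (a - z)) volume 0 1 := by
  simpa using
    ((intervalIntegral.intervalIntegrable_log' (a := a - 1) (b := a)).comp_sub_left a).symm

theorem integral_logb_div_sub_sub (b a c : ℝ) :
    ∫ z in (0:ℝ)..1, logb b ((a - z) / (c - z))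
      = ((a * log a - (a - 1) * log (a - 1)) - (c * log c - (c - 1) * log (c - 1))) / log b := by
  have h_ae : ∀ᵐ z : ℝ, logb b ((a - z) / (c - z)) = (log (a - z) - log (c - z)) / log b := by
    have h_null : ({a, c} : Set ℝ)ᶜ ∈ ae volume :=
      compl_mem_ae_iff.2 ((Set.toFinite _).measure_zero _)
    filter_upwards [h_null] with z hz
    simp only [Set.mem_compl_iff, Set.mem_insert_iff, Set.mem_singleton_iff, not_or] at hz
    rw [logb, log_div (sub_ne_zero.2 (Ne.symm hz.1)) (sub_ne_zero.2 (Ne.symm hz.2))]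
  rw [intervalIntegral.integral_congr_ae (h_ae.mono fun z hz _ => hz),
    intervalIntegral.integral_div,
    intervalIntegral.integral_sub (intervalIntegrable_log_sub_left a)
      (intervalIntegrable_log_sub_left c),
    integral_log_sub_left, integral_log_sub_left]
  ring

theorem binEnt_div_self {c : ℝ} (hc : c ≠ 0) :
    binEnt c / c = (c⁻¹ * log c⁻¹ - (c⁻¹ - 1) * log (c⁻¹ - 1)) / log 2 := by
  rcases eq_or_ne c 1 with rfl | hc1
  · simp [binEnt]
  have h_inv_sub : c⁻¹ - 1 = (1 - c) / c := by field_simp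
  rw [h_inv_sub, log_div (sub_ne_zero.2 hc1.symm) hc, log_inv, binEnt, logb, logb]
  field_simp
  ring

theorem binary_entropy_loss_general (φ β : ℝ) (hφ : 0 < φ) (hφβ : φ ≤ β) :
    ∫ z in (0:ℝ)..1, Real.logb 2 ((φ⁻¹ - z) / (β * φ⁻¹ - z))
      = binEnt φ / φ - (β / φ) * binEnt (φ / β) := by
  have hβ : β ≠ 0 := (hφ.trans_le hφβ).ne'
  rw [← inv_div φ β, inv_mul_eq_div, integral_logb_div_sub_sub, binEnt_div_self hφ.ne',
    binEnt_div_self (div_ne_zero hφ.ne' hβ), inv_div, ← div_eq_mul_inv, sub_div]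

theorem binary_entropy_loss (φ β : ℝ) (hφ : 0 < φ) (hφβ : φ ≤ β) (hβ : β ≤ 1) :
    ∫ z in (0:ℝ)..1, Real.logb 2 ((φ⁻¹ - z) / (β * φ⁻¹ - z))
      = binEnt φ / φ - (β / φ) * binEnt (φ / β) :=
  binary_entropy_loss_general φ β hφ hφβ
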